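/- Let A be an affine integral domain over a field k of transcendence degree 1 over k, and suppose A admits a non-trivial exponential map φ. Then A is isomorphic, as an algebra over the algebraic closure k̃ of k in A, to the polynomial ring in one variable over k̃, and A^φ = k̃. -/

import Mathlib

open Polynomial

/-- A `k`-algebra homomorphism `φ : A → A[U]` is an *exponential map* if evaluating `U` at `0`
gives the identity and `φ_V φ_U = φ_{V+U}` (comultiplicativity). -/
def IsExponentialMap {k A : Type*} [CommSemiring k] [CommSemiring A] [Algebra k A]
    (φ : A →ₐ[k] A[X]) : Prop :=
  (∀ a : A, (φ a).eval 0 = a) ∧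
  (∀ a : A, (φ a).map (φ : A →+* A[X]) =
      (φ a).eval₂ ((C : A[X] →+* A[X][X]).comp (C : A →+* A[X])) (C X + X))

/-- The ring of invariants `A^φ = {a ∈ A | φ(a) = a}` of a `k`-algebra map `φ : A → A[U]`,
as a subalgebra of `A`. -/
def expInv {k A : Type*} [CommSemiring k] [CommSemiring A] [Algebra k A]
    (φ : A →ₐ[k] A[X]) : Subalgebra k A where
  carrier := {a | φ a = C a}
  mul_mem' := fun {a b} ha hb => by
    simp only [Set.mem_setOf_eq] at *
    rw [map_mul, ha, hb, ← C_mul]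
  add_mem' := fun {a b} ha hb => by
    simp only [Set.mem_setOf_eq] at *
    rw [map_add, ha, hb, ← C_add]
  algebraMap_mem' := fun r => by
    simp only [Set.mem_setOf_eq, AlgHom.commutes, Polynomial.algebraMap_apply]

/-- An exponential map is non-trivial if its ring of invariants is a proper subring. -/
def IsNontrivialExpMap {k A : Type*} [CommSemiring k] [CommSemiring A] [Algebra k A]
    (φ : A →ₐ[k] A[X]) : Prop :=
  IsExponentialMap φ ∧ expInv φ ≠ ⊤

/-- The Derksen invariant: the `k`-subalgebra of `A` generated by the invariants of all
non-trivial exponential maps on `A`. -/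
def DerksenInvariant (k A : Type*) [CommSemiring k] [CommSemiring A] [Algebra k A] :
    Subalgebra k A :=
  Algebra.adjoin k {a : A | ∃ φ : A →ₐ[k] A[X], IsNontrivialExpMap φ ∧ a ∈ expInv φ}

/-- The transcendence degree of a commutative `k`-algebra `A`: the supremum of the
cardinalities of algebraically independent subsets of `A`. -/
noncomputable def trdeg (k A : Type*) [CommRing k] [CommRing A] [Algebra k A] : Cardinal :=
  ⨆ s : {s : Set A // AlgebraicIndependent k ((↑) : s → A)}, Cardinal.mk s.1

/-!
Write `φ a = ∑ᵢ φᵢ(a) Uⁱ`. Comultiplicativity says precisely that `φ (φᵢ(a))` is the `i`-th Hasse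
derivative of `φ a`; so the leading coefficient of `φ a` is invariant and
`deg φ(φᵢ(a)) ≤ deg φ(a) - i`.

Since `A` is a domain, `A^φ` is algebraically closed in `A`: if `f(b) = 0` for a nonzero `f` with
invariant coefficients, then `f ∘ φ(b) = 0`, so `φ(b)` is constant. Hence `k̃ ⊆ A^φ`; conversely a
transcendental invariant would make `A` algebraic over `A^φ` (as `trdeg = 1`), forcing `A^φ = A`.
So `A^φ = k̃`, a field.

Let `t` have minimal positive degree `n`. By minimality `φᵢ(t)` is invariant for `0 < i < n`, which
makes `n.choose i` vanish in `A`; thus `(U + 1)ⁿ = Uⁿ + 1` and `(nq + ℓ).choose ℓ = 1` for `ℓ < n`.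
If `deg φ(a) = nq + ℓ` with `0 < ℓ < n`, then `φ_{nq}(a)` would have degree exactly `ℓ`; so `n`
divides every degree. With `φ t` made monic, subtracting multiples of powers of `t` lowers degrees,
so `A = k̃[t]`, and `t` is transcendental over `k̃`.
-/

open Polynomial

theorem Polynomial.hasseDeriv_map {R S : Type*} [Semiring R] [Semiring S] (f : R →+* S) (n : ℕ)
    (p : R[X]) : hasseDeriv n (p.map f) = (hasseDeriv n p).map f := by
  ext m
  simp only [coeff_map, hasseDeriv_coeff, map_mul, map_natCast]

theorem Nat.cast_choose_mul_add_eq_one {R : Type*} [CommRing R] {n : ℕ}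
    (h : ∀ i, 0 < i → i < n → (n.choose i : R) = 0) (q : ℕ) {ℓ : ℕ} (hℓ : ℓ < n) :
    ((n * q + ℓ).choose ℓ : R) = 1 := by
  have hfrob : ((X : R[X]) + 1) ^ n = X ^ n + 1 := by
    ext i
    rw [coeff_X_add_one_pow, coeff_add, coeff_X_pow, coeff_one]
    rcases lt_trichotomy i n with hi | rfl | hi
    · rcases Nat.eq_zero_or_pos i with rfl | hi0
      · simp [hi.ne]
      · simp [h i hi0 hi, hi.ne, hi0.ne']
    · simp [(hℓ.trans_le' (Nat.zero_le ℓ)).ne']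
    · simp [Nat.choose_eq_zero_of_lt hi, hi.ne', (hi.trans_le' (Nat.zero_le n)).ne']
  obtain ⟨g, hg⟩ : (X ^ n : R[X]) ∣ (X ^ n + 1) ^ q - 1 := by
    have := _root_.sub_dvd_pow_sub_pow (X ^ n + 1 : R[X]) 1 q
    rwa [one_pow, add_sub_cancel_right] at this
  calc ((n * q + ℓ).choose ℓ : R) = (((X : R[X]) + 1) ^ (n * q + ℓ)).coeff ℓ :=
        (coeff_X_add_one_pow R _ ℓ).symm
    _ = ((X + 1) ^ ℓ + X ^ n * (g * (X + 1) ^ ℓ)).coeff ℓ := by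
        rw [pow_add, pow_mul, hfrob, ← sub_add_cancel ((X ^ n + 1 : R[X]) ^ q) 1, hg]
        ring_nf
    _ = 1 := by
        rw [coeff_add, coeff_X_add_one_pow, Nat.choose_self, Nat.cast_one, coeff_X_pow_mul',
          if_neg (not_le.mpr hℓ), add_zero]

theorem Subalgebra.isAlgebraic_of_trdeg_eq_one {k A : Type*} [CommRing k] [Nontrivial k]
    [CommRing A] [NoZeroDivisors A] [Algebra k A] (htd : Algebra.trdeg k A = 1)
    {S : Subalgebra k A} {a : A} (ha : Transcendental k a) (haS : a ∈ S) :
    Algebra.IsAlgebraic S A := by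
  have hbasis : IsTranscendenceBasis k fun _ : PUnit => a :=
    (algebraicIndependent_unique_type_iff.mpr ha).isTranscendenceBasis_of_trdeg_le_of_finite
      (by simp [htd])
  have hle : Algebra.adjoin k (Set.range fun _ : PUnit => a) ≤ S :=
    Algebra.adjoin_le (Set.range_subset_iff.mpr fun _ => haS)
  exact ⟨fun b => (hbasis.isAlgebraic.isAlgebraic b).tower_top_of_subalgebra_le hle⟩

theorem mem_expInv_iff {k A : Type*} [CommSemiring k] [CommSemiring A] [Algebra k A]
    {φ : A →ₐ[k] A[X]} {a : A} : a ∈ expInv φ ↔ φ a = C a := Iff.rfl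

theorem apply_aeval_eq_comp {k A : Type*} [CommRing k] [CommRing A] [Algebra k A]
    (φ : A →ₐ[k] A[X]) (f : (expInv φ)[X]) (b : A) :
    φ (aeval b f) = (f.map (algebraMap (expInv φ) A)).comp (φ b) := by
  rw [aeval_def, eval₂_eq_sum_range, map_sum, comp, eval₂_eq_sum_range,
    natDegree_map_eq_of_injective Subtype.val_injective]
  refine Finset.sum_congr rfl fun i _ => ?_
  rw [map_mul, map_pow, coeff_map]
  exact congrArg (· * φ b ^ i) (f.coeff i).2

namespace IsExponentialMap

section Semiring

variable {k A : Type*} [CommSemiring k] [CommSemiring A] [Algebra k A] {φ : A →ₐ[k] A[X]}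
  (hφ : IsExponentialMap φ)
include hφ

theorem injective : Function.Injective φ := fun a b h => by
  rw [← hφ.1 a, ← hφ.1 b, h]

theorem mem_expInv_iff_natDegree_eq_zero {a : A} : a ∈ expInv φ ↔ (φ a).natDegree = 0 := by
  refine ⟨fun h => by rw [mem_expInv_iff.mp h, natDegree_C], fun h => ?_⟩
  rw [mem_expInv_iff, eq_C_of_natDegree_eq_zero h, coeff_zero_eq_eval_zero, hφ.1]

theorem exists_natDegree_minimal (hnt : expInv φ ≠ ⊤) :
    ∃ t, (φ t).natDegree ≠ 0 ∧ ∀ a, (φ a).natDegree ≠ 0 → (φ t).natDegree ≤ (φ a).natDegree := by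
  classical
  obtain ⟨b, hb⟩ := SetLike.exists_not_mem_of_ne_top _ hnt Algebra.coe_top
  have hex : ∃ n, n ≠ 0 ∧ ∃ a, (φ a).natDegree = n :=
    ⟨_, mt hφ.mem_expInv_iff_natDegree_eq_zero.mpr hb, b, rfl⟩
  obtain ⟨hn, t, ht⟩ := Nat.find_spec hex
  exact ⟨t, ht ▸ hn, fun a ha => ht ▸ Nat.find_min' hex ⟨ha, a, rfl⟩⟩

theorem apply_coeff (a : A) (i : ℕ) : φ ((φ a).coeff i) = hasseDeriv i (φ a) := by
  have h := congrArg (coeff · i) (hφ.2 a)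
  simp only [coeff_map, RingHom.coe_coe] at h
  rw [h, ← eval₂_map, add_comm, ← comp, ← taylor_apply, taylor_coeff, hasseDeriv_map, eval_map,
    eval₂_C_X]

theorem leadingCoeff_mem_expInv (a : A) : (φ a).leadingCoeff ∈ expInv φ := by
  change φ ((φ a).coeff (φ a).natDegree) = C _
  rw [hφ.apply_coeff, hasseDeriv_natDegree_eq_C]

theorem natDegree_apply_coeff_le (a : A) (i : ℕ) :
    (φ ((φ a).coeff i)).natDegree ≤ (φ a).natDegree - i := by
  rw [hφ.apply_coeff]
  exact natDegree_hasseDeriv_le _ _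

theorem coeff_apply_coeff (a : A) (i s : ℕ) :
    (φ ((φ a).coeff i)).coeff s = (s + i).choose i * (φ a).coeff (s + i) := by
  rw [hφ.apply_coeff, hasseDeriv_coeff]

end Semiring

section Domain

variable {k A : Type*} [CommRing k] [CommRing A] [IsDomain A] [Algebra k A]
  {φ : A →ₐ[k] A[X]} (hφ : IsExponentialMap φ)
include hφ

theorem mem_expInv_of_isAlgebraic {b : A} (hb : IsAlgebraic (expInv φ) b) : b ∈ expInv φ := by
  obtain ⟨f, hf0, hfb⟩ := hb
  have hcomp : (f.map (algebraMap (expInv φ) A)).comp (φ b) = 0 := by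
    rw [← apply_aeval_eq_comp, hfb, map_zero]
  rcases comp_eq_zero_iff.mp hcomp with hf | ⟨-, hconst⟩
  · exact absurd ((Polynomial.map_eq_zero_iff Subtype.val_injective).mp hf) hf0
  · exact hφ.mem_expInv_iff_natDegree_eq_zero.mpr (by rw [hconst, natDegree_C])

theorem integralClosure_le_expInv : integralClosure k A ≤ expInv φ := fun _ ha =>
  hφ.mem_expInv_of_isAlgebraic ha.tower_top.isAlgebraic

end Domain

theorem expInv_le_integralClosure {k A : Type*} [Field k] [CommRing A] [IsDomain A]
    [Algebra k A] {φ : A →ₐ[k] A[X]} (hφ : IsExponentialMap φ) (htd : Algebra.trdeg k A = 1)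
    (hnt : expInv φ ≠ ⊤) : expInv φ ≤ integralClosure k A := by
  intro a ha
  by_contra hna
  have htr : Transcendental k a := fun halg => hna halg.isIntegral
  obtain ⟨b, hb⟩ := SetLike.exists_not_mem_of_ne_top _ hnt Algebra.coe_top
  have := Subalgebra.isAlgebraic_of_trdeg_eq_one htd htr ha
  exact hb (hφ.mem_expInv_of_isAlgebraic (Algebra.IsAlgebraic.isAlgebraic b))

section MinimalDegree

variable {k A : Type*} [CommSemiring k] [CommRing A] [IsDomain A] [Algebra k A]
  {φ : A →ₐ[k] A[X]} (hφ : IsExponentialMap φ) {t : A}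
  (hmin : ∀ a, (φ a).natDegree ≠ 0 → (φ t).natDegree ≤ (φ a).natDegree)
include hφ hmin

theorem cast_choose_natDegree_eq_zero {i : ℕ} (hi0 : 0 < i) (hi : i < (φ t).natDegree) :
    ((φ t).natDegree.choose i : A) = 0 := by
  have hinv : (φ t).coeff i ∈ expInv φ := hφ.mem_expInv_iff_natDegree_eq_zero.mpr (by
    by_contra h
    have := hmin _ h
    have := hφ.natDegree_apply_coeff_le t i
    omega)
  have hcoeff := hφ.coeff_apply_coeff t i ((φ t).natDegree - i)
  rw [mem_expInv_iff.mp hinv, coeff_C, if_neg (by omega), Nat.sub_add_cancel hi.le,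
    coeff_natDegree] at hcoeff
  have hφt : φ t ≠ 0 := by rintro h; simp [h] at hi
  exact (mul_eq_zero.mp hcoeff.symm).resolve_right (leadingCoeff_ne_zero.mpr hφt)

theorem natDegree_dvd_natDegree (ht : (φ t).natDegree ≠ 0) (a : A) :
    (φ t).natDegree ∣ (φ a).natDegree := by
  have hdiv : ∃ q ℓ, ℓ < (φ t).natDegree ∧ (φ a).natDegree = (φ t).natDegree * q + ℓ :=
    ⟨_, _, Nat.mod_lt _ (Nat.pos_of_ne_zero ht), (Nat.div_add_mod _ _).symm⟩
  obtain ⟨q, ℓ, hℓn, hm⟩ := hdiv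
  rcases eq_or_ne ℓ 0 with rfl | hℓ0
  · exact ⟨q, hm⟩
  have hφa : φ a ≠ 0 := fun h => hℓ0 (by rw [h, natDegree_zero] at hm; omega)
  have hcoeff := hφ.coeff_apply_coeff a ((φ t).natDegree * q) ℓ
  rw [add_comm ℓ, Nat.choose_symm_add, Nat.cast_choose_mul_add_eq_one
    (fun i => hφ.cast_choose_natDegree_eq_zero hmin) q hℓn, one_mul, ← hm,
    coeff_natDegree] at hcoeff
  have hge := le_natDegree_of_ne_zero (hcoeff ▸ leadingCoeff_ne_zero.mpr hφa)
  have hle := hφ.natDegree_apply_coeff_le a ((φ t).natDegree * q)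
  rw [hm, Nat.add_sub_cancel_left] at hle
  exact absurd (hmin ((φ a).coeff ((φ t).natDegree * q)) (by omega)) (by omega)

end MinimalDegree

section PolynomialRing

variable {k A : Type*} [CommRing k] [CommRing A] [IsDomain A] [Algebra k A]
  {φ : A →ₐ[k] A[X]} (hφ : IsExponentialMap φ) (hK : IsField (expInv φ))
include hφ hK

theorem exists_isMonicOfDegree_mul {a : A} (ha : a ≠ 0) :
    ∃ u ∈ expInv φ, ∃ v ∈ expInv φ, v * u = 1 ∧
      IsMonicOfDegree (φ (u * a)) (φ a).natDegree := by
  have hφa : φ a ≠ 0 := (map_ne_zero_iff _ hφ.injective).mpr ha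
  obtain ⟨u, hu⟩ := hK.mul_inv_cancel (a := ⟨_, hφ.leadingCoeff_mem_expInv a⟩)
    (mt (congrArg Subtype.val) (leadingCoeff_ne_zero.mpr hφa))
  have hu' : (φ a).leadingCoeff * u = 1 := congrArg Subtype.val hu
  refine ⟨u, u.2, _, hφ.leadingCoeff_mem_expInv a, hu', ?_⟩
  rw [map_mul, mem_expInv_iff.mp u.2]
  have hu0 : (u : A) ≠ 0 := left_ne_zero_of_mul_eq_one (mul_comm _ (u : A) ▸ hu')
  refine ⟨natDegree_C_mul hu0, ?_⟩
  rw [Monic, leadingCoeff_mul, leadingCoeff_C, mul_comm, hu']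

theorem adjoin_singleton_eq_top {t : A} {n : ℕ} (ht : IsMonicOfDegree (φ t) n)
    (hdvd : ∀ a, n ∣ (φ a).natDegree) : Algebra.adjoin (expInv φ) {t} = ⊤ := by
  refine Algebra.eq_top_iff.mpr fun a => ?_
  induction hm : (φ a).natDegree using Nat.strong_induction_on generalizing a with
  | _ m ih =>
  rcases eq_or_ne m 0 with rfl | hm0
  · exact Subalgebra.algebraMap_mem _ (⟨a, hφ.mem_expInv_iff_natDegree_eq_zero.mpr hm⟩ : expInv φ)
  obtain ⟨q, rfl⟩ := hm ▸ hdvd a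
  have ha : a ≠ 0 := fun h => hm0 (by rw [← hm, h, map_zero, natDegree_zero])
  obtain ⟨u, -, v, hv, hvu, hmonic⟩ := hφ.exists_isMonicOfDegree_mul hK ha
  have hlt : (φ (u * a - t ^ q)).natDegree < n * q := by
    rw [map_sub, map_pow]
    exact (hm ▸ hmonic).natDegree_sub_lt hm0 (ht.pow q)
  have hrepr : a = v * ((u * a - t ^ q) + t ^ q) := by
    rw [sub_add_cancel, ← mul_assoc, hvu, one_mul]
  have hvS : v ∈ Algebra.adjoin (expInv φ) {t} :=
    (Algebra.adjoin (expInv φ) {t}).algebraMap_mem (⟨v, hv⟩ : expInv φ)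
  have htS : t ∈ Algebra.adjoin (expInv φ) {t} := Algebra.subset_adjoin rfl
  rw [hrepr]
  exact mul_mem hvS (add_mem (ih _ hlt _ rfl) (pow_mem htS q))

theorem nonempty_algEquiv_polynomial (hnt : expInv φ ≠ ⊤) :
    Nonempty (A ≃ₐ[expInv φ] (expInv φ)[X]) := by
  obtain ⟨t₀, ht₀, hmin⟩ := hφ.exists_natDegree_minimal hnt
  have ht₀0 : t₀ ≠ 0 := fun h => ht₀ (by rw [h, map_zero, natDegree_zero])
  obtain ⟨u, -, -, -, -, ht⟩ := hφ.exists_isMonicOfDegree_mul hK ht₀0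
  have htr : Transcendental (expInv φ) (u * t₀) := fun h => ht₀ <| ht.natDegree_eq ▸
    hφ.mem_expInv_iff_natDegree_eq_zero.mp (hφ.mem_expInv_of_isAlgebraic h)
  have hsurj : Function.Surjective (aeval (R := expInv φ) (u * t₀)) := by
    rw [← AlgHom.range_eq_top, ← Algebra.adjoin_singleton_eq_range_aeval]
    exact hφ.adjoin_singleton_eq_top hK ht (hφ.natDegree_dvd_natDegree hmin ht₀)
  exact ⟨(AlgEquiv.ofBijective _ ⟨transcendental_iff_injective.mp htr, hsurj⟩).symm⟩

end PolynomialRing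

end IsExponentialMap

theorem trdeg_one_of_expMap_general {k A : Type*} [Field k] [CommRing A] [IsDomain A]
    [Algebra k A] (htd : trdeg k A = 1)
    (φ : A →ₐ[k] A[X]) (hφ : IsExponentialMap φ) (hnt : expInv φ ≠ ⊤) :
    Nonempty (A ≃ₐ[↥(integralClosure k A)] Polynomial ↥(integralClosure k A)) ∧
      expInv φ = integralClosure k A := by
  -- `trdeg k A` is `Algebra.trdeg k A` by definition.
  have hE : expInv φ = integralClosure k A :=
    le_antisymm (hφ.expInv_le_integralClosure htd hnt) hφ.integralClosure_le_expInv
  have hK : IsField (integralClosure k A) := isField_of_isIntegral_of_isField' (Field.toIsField k)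
  rw [← hE] at hK ⊢
  exact ⟨hφ.nonempty_algEquiv_polynomial hK hnt, rfl⟩

/-- **Lemma 2.1(v)**: if an affine domain `A` over `k` has transcendence degree one over `k`
and admits a non-trivial exponential map `φ`, then `A` is a polynomial ring in one variable
over the algebraic closure `k̃` of `k` in `A`, and `A^φ = k̃`. -/
theorem trdeg_one_of_expMap {k A : Type*} [Field k] [CommRing A] [IsDomain A]
    [Algebra k A] [Algebra.FiniteType k A] (htd : trdeg k A = 1)
    (φ : A →ₐ[k] A[X]) (hφ : IsExponentialMap φ) (hnt : expInv φ ≠ ⊤) :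
    Nonempty (A ≃ₐ[↥(integralClosure k A)] Polynomial ↥(integralClosure k A)) ∧
      expInv φ = integralClosure k A :=
  trdeg_one_of_expMap_general htd φ hφ hnt
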